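/- Let T be an automorphism of a probability space (X, μ), let (S_k)_{k ∈ ℕ} be a sequence of elements of WH(T), and let R be an automorphism of (X, μ) for which there exists a measurable function κ : X → ℕ with R(x) = S_{κ(x)}(x) for μ-almost every x. Then R ∈ WH(T). In particular, WH(T) coincides with its full group. -/

import Mathlib

open MeasureTheory Filter Topology
open scoped symmDiff ENNReal

/-- The weakly homoclinic group `WH(T)`: all measure-preserving automorphisms `S` such that
for every `f ∈ L²(X, μ)`, `(1/N) ∑_{i=1}^{N} f ∘ (Tⁱ ∘ S ∘ T⁻ⁱ) → f` in `L²`. -/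
def WeaklyHomoclinic {X : Type*} [MeasurableSpace X] (μ : Measure X) (T : X ≃ᵐ X) :
    Set (X ≃ᵐ X) :=
  {S | MeasurePreserving (⇑S) μ μ ∧ ∀ f : X → ℝ, MemLp f 2 μ →
    Tendsto (fun N : ℕ => eLpNorm (fun x =>
      (N : ℝ)⁻¹ * ∑ i ∈ Finset.Icc 1 N, f ((⇑T)^[i] (S ((⇑T.symm)^[i] x))) - f x) 2 μ)
      atTop (𝓝 0)}

/-!
For `f ∈ L²` put `fᵢ = f ∘ (Tⁱ S T⁻ⁱ)` and let `A_N` be the Cesàro mean of `f₁, …, f_N`.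
As `‖fᵢ‖ = ‖f‖`, the mean of `‖fᵢ - f‖²` is `2 ⟪f - A_N, f⟫`, so by Jensen `A_N → f` iff the
Cesàro means of the distances `‖fᵢ - f‖` tend to zero. This stronger property survives countable gluing: off the set
`{K ≤ κ ∘ T⁻ⁱ}` the map `Tⁱ R T⁻ⁱ` agrees with one of the finitely many `Tⁱ S_k T⁻ⁱ`, `k < K`,
and that set has measure `μ {K ≤ κ}` for every `i`, where the identically distributed, hence
uniformly integrable, functions `f ∘ (Tⁱ R T⁻ⁱ) - f` have uniformly small norm.
-/

section

open Finset ProbabilityTheory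

theorem tendsto_avg_of_tendsto_avg_sq {b : ℕ → ℝ}
    (h : Tendsto (fun N : ℕ => (N : ℝ)⁻¹ * ∑ i ∈ Icc 1 N, b i ^ 2) atTop (𝓝 0)) :
    Tendsto (fun N : ℕ => (N : ℝ)⁻¹ * ∑ i ∈ Icc 1 N, b i) atTop (𝓝 0) := by
  have hsqrt := h.sqrt
  rw [Real.sqrt_zero] at hsqrt
  refine squeeze_zero_norm (fun N => ?_) hsqrt
  have hjensen := sum_div_card_sq_le_sum_sq_div_card (s := Icc 1 N) (f := b)
  rw [Nat.card_Icc, Nat.add_sub_cancel] at hjensen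
  rw [Real.norm_eq_abs, ← Real.sqrt_sq_eq_abs, inv_mul_eq_div, inv_mul_eq_div]
  exact Real.sqrt_le_sqrt hjensen

open Finset in
theorem tendsto_avg_norm_sub_of_tendsto_avg {E : Type*} [NormedAddCommGroup E]
    [InnerProductSpace ℝ E] {g : ℕ → E} {g₀ : E} (hg : ∀ i, ‖g i‖ ≤ ‖g₀‖)
    (h : Tendsto (fun N : ℕ => (N : ℝ)⁻¹ • ∑ i ∈ Icc 1 N, g i) atTop (𝓝 g₀)) :
    Tendsto (fun N : ℕ => (N : ℝ)⁻¹ * ∑ i ∈ Icc 1 N, ‖g i - g₀‖) atTop (𝓝 0) := by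
  refine tendsto_avg_of_tendsto_avg_sq ?_
  have hinner : Tendsto
      (fun N : ℕ => (2 : ℝ) * inner ℝ (g₀ - (N : ℝ)⁻¹ • ∑ i ∈ Icc 1 N, g i) g₀) atTop (𝓝 0) := by
    simpa using (((tendsto_const_nhds (x := g₀)).sub h).inner (𝕜 := ℝ)
      (tendsto_const_nhds (x := g₀))).const_mul (2 : ℝ)
  refine squeeze_zero' (.of_forall fun N => by positivity) ?_ hinner
  filter_upwards [eventually_ne_atTop 0] with N hN
  have hsq : ∀ i, ‖g i - g₀‖ ^ 2 ≤ 2 * ‖g₀‖ ^ 2 - 2 * inner ℝ (g i) g₀ := fun i => by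
    rw [norm_sub_sq_real]
    nlinarith [hg i, norm_nonneg (g i)]
  calc (N : ℝ)⁻¹ * ∑ i ∈ Icc 1 N, ‖g i - g₀‖ ^ 2
      ≤ (N : ℝ)⁻¹ * ∑ i ∈ Icc 1 N, (2 * ‖g₀‖ ^ 2 - 2 * inner ℝ (g i) g₀) := by
        gcongr with i; exact hsq i
    _ = 2 * inner ℝ (g₀ - (N : ℝ)⁻¹ • ∑ i ∈ Icc 1 N, g i) g₀ := by
        rw [inner_sub_left, real_inner_smul_left, sum_inner, real_inner_self_eq_norm_sq,
          sum_sub_distrib, ← mul_sum, sum_const, Nat.card_Icc, Nat.add_sub_cancel, nsmul_eq_mul]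
        field_simp
        rw [← mul_sum]
        ring

theorem tendsto_measure_setOf_le_atTop {X : Type*} [MeasurableSpace X] {μ : Measure X}
    [IsFiniteMeasure μ] {κ : X → ℕ} (hκ : Measurable κ) :
    Tendsto (fun K : ℕ => μ {x | K ≤ κ x}) atTop (𝓝 0) := by
  have hempty : ⋂ K : ℕ, {x | K ≤ κ x} = ∅ :=
    Set.eq_empty_of_forall_notMem fun x hx =>
      Nat.not_succ_le_self _ (Set.mem_iInter.1 hx (κ x + 1))
  simpa [hempty, Function.comp_def] using
    tendsto_measure_iInter_atTop (μ := μ) (s := fun K : ℕ => {x | K ≤ κ x})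
      (fun K => (hκ measurableSet_Ici).nullMeasurableSet)
      (fun _ _ hKL _ hx => le_trans hKL hx) ⟨0, measure_ne_top μ _⟩

theorem MeasureTheory.MeasurePreserving.identDistrib_comp {X Y β : Type*} [MeasurableSpace X]
    [MeasurableSpace Y] [MeasurableSpace β] {μ : Measure X} {ν : Measure Y} {T : Y → X}
    {f : X → β} (hT : MeasurePreserving T ν μ) (hf : AEMeasurable f μ) :
    IdentDistrib (f ∘ T) f ν μ where
  aemeasurable_fst := hf.comp_quasiMeasurePreserving hT.quasiMeasurePreserving
  aemeasurable_snd := hf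
  map_eq := by
    rw [← AEMeasurable.map_map_of_aemeasurable (by rwa [hT.map_eq]) hT.aemeasurable, hT.map_eq]

variable {X E : Type*} [MeasurableSpace X] {μ : Measure X} [NormedAddCommGroup E]
  {p : ℝ≥0∞} {f : X → E} {φ : ℕ → X → X}

noncomputable def cesaroDist (μ : Measure X) (p : ℝ≥0∞) (f : X → E) (φ : ℕ → X → X) (N : ℕ) :
    ℝ≥0∞ :=
  (N : ℝ≥0∞)⁻¹ * ∑ i ∈ Icc 1 N, eLpNorm (fun x => f (φ i x) - f x) p μ

theorem eLpNorm_avg_sub_le_cesaroDist [NormedSpace ℝ E] (hp : 1 ≤ p)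
    (hf : AEStronglyMeasurable f μ) (hφ : ∀ i, Measure.QuasiMeasurePreserving (φ i) μ μ)
    {N : ℕ} (hN : N ≠ 0) :
    eLpNorm (fun x => (N : ℝ)⁻¹ • ∑ i ∈ Icc 1 N, f (φ i x) - f x) p μ ≤ cesaroDist μ p f φ N := by
  have hsplit : (fun x => (N : ℝ)⁻¹ • ∑ i ∈ Icc 1 N, f (φ i x) - f x)
      = (N : ℝ)⁻¹ • ∑ i ∈ Icc 1 N, fun x => f (φ i x) - f x := by
    ext x
    rw [Pi.smul_apply, Finset.sum_apply, sum_sub_distrib, smul_sub, sum_const, Nat.card_Icc,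
      Nat.add_sub_cancel, ← Nat.cast_smul_eq_nsmul ℝ, smul_smul,
      inv_mul_cancel₀ (by simpa using hN), one_smul]
  rw [hsplit, eLpNorm_const_smul, enorm_inv (by positivity), Real.enorm_natCast]
  exact mul_le_mul_right
    (eLpNorm_sum_le (fun i _ => (hf.comp_quasiMeasurePreserving (hφ i)).sub hf) hp) _

theorem tendsto_cesaroDist_of_tendsto_eLpNorm_avg_sub [InnerProductSpace ℝ E]
    (hf : MemLp f 2 μ) (hφ : ∀ i, MeasurePreserving (φ i) μ μ)
    (h : Tendsto (fun N : ℕ => eLpNorm (fun x => (N : ℝ)⁻¹ • ∑ i ∈ Icc 1 N, f (φ i x) - f x) 2 μ)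
      atTop (𝓝 0)) :
    Tendsto (cesaroDist μ 2 f φ) atTop (𝓝 0) := by
  have hfφ : ∀ i, MemLp (fun x => f (φ i x)) 2 μ := fun i => hf.comp_measurePreserving (hφ i)
  set F : Lp E 2 μ := hf.toLp f
  set G : ℕ → Lp E 2 μ := fun i => (hfφ i).toLp _
  have hG : ∀ i, ‖G i - F‖ = (eLpNorm (fun x => f (φ i x) - f x) 2 μ).toReal := fun i => by
    rw [← MemLp.toLp_sub, Lp.norm_toLp]
    rfl
  have hGF : ∀ i, ‖G i‖ ≤ ‖F‖ := fun i => by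
    rw [Lp.norm_toLp, Lp.norm_toLp]
    exact (congrArg ENNReal.toReal (eLpNorm_comp_measurePreserving hf.1 (hφ i))).le
  have havg : ∀ N : ℕ, ‖(N : ℝ)⁻¹ • ∑ i ∈ Icc 1 N, G i - F‖
      = (eLpNorm (fun x => (N : ℝ)⁻¹ • ∑ i ∈ Icc 1 N, f (φ i x) - f x) 2 μ).toReal := by
    intro N
    rw [Lp.norm_def]
    congr 1
    refine eLpNorm_congr_ae ?_
    filter_upwards [Lp.coeFn_sub ((N : ℝ)⁻¹ • ∑ i ∈ Icc 1 N, G i) F,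
      Lp.coeFn_smul (N : ℝ)⁻¹ (∑ i ∈ Icc 1 N, G i), Lp.coeFn_fun_finsetSum (Icc 1 N) G,
      hf.coeFn_toLp, ae_all_iff.2 fun i => (hfφ i).coeFn_toLp] with x hsub hsmul hsum hF hGi
    simp only [hsub, Pi.sub_apply, hsmul, Pi.smul_apply, hsum, G, F, hF, hGi]
  have hconv : Tendsto (fun N : ℕ => (N : ℝ)⁻¹ • ∑ i ∈ Icc 1 N, G i) atTop (𝓝 F) := by
    rw [tendsto_iff_norm_sub_tendsto_zero]
    simpa only [havg, Function.comp_def, ENNReal.toReal_zero]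
      using (ENNReal.tendsto_toReal ENNReal.zero_ne_top).comp h
  have hfinite : ∀ i, eLpNorm (fun x => f (φ i x) - f x) 2 μ ≠ ⊤ :=
    fun i => ((hfφ i).sub hf).eLpNorm_ne_top
  have hne_top : ∀ N, cesaroDist μ 2 f φ N ≠ ⊤ := fun N => by
    rcases eq_or_ne N 0 with rfl | hN
    · simp [cesaroDist]
    · exact ENNReal.mul_ne_top (by simpa using hN) (ENNReal.sum_ne_top.2 fun i _ => hfinite i)
  rw [← ENNReal.tendsto_toReal_iff hne_top ENNReal.zero_ne_top]
  simpa only [cesaroDist, ENNReal.toReal_mul, ENNReal.toReal_inv, ENNReal.toReal_natCast,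
    ENNReal.toReal_sum fun i _ => hfinite i, hG, ENNReal.toReal_zero]
    using tendsto_avg_norm_sub_of_tendsto_avg hGF hconv

theorem unifIntegrable_comp_sub [IsFiniteMeasure μ] [MeasurableSpace E] [BorelSpace E]
    (hp : 1 ≤ p) (hp' : p ≠ ∞) (hf : MemLp f p μ) (hφ : ∀ i, MeasurePreserving (φ i) μ μ) :
    UnifIntegrable (fun i x => f (φ i x) - f x) p μ := by
  have hident : ∀ i, IdentDistrib (f ∘ φ i) (f ∘ φ 0) μ μ := fun i =>
    ((hφ i).identDistrib_comp hf.1.aemeasurable).trans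
      ((hφ 0).identDistrib_comp hf.1.aemeasurable).symm
  have hui := (MemLp.uniformIntegrable_of_identDistrib (f := fun i => f ∘ φ i) hp hp'
    (hf.comp_measurePreserving (hφ 0)) hident).unifIntegrable
  exact hui.sub (unifIntegrable_const hp hp' hf) hp
    (fun i => hf.1.comp_measurePreserving (hφ i)) fun _ => hf.1

theorem eLpNorm_comp_sub_le_of_ae_eq_piecewise (hp : 1 ≤ p) (hf : AEStronglyMeasurable f μ)
    {φ : X → X} {ψ : ℕ → X → X} {κ : X → ℕ} (hφ : Measure.QuasiMeasurePreserving φ μ μ)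
    (hψ : ∀ k, Measure.QuasiMeasurePreserving (ψ k) μ μ) (hκ : Measurable κ)
    (h : ∀ᵐ x ∂μ, φ x = ψ (κ x) x) (K : ℕ) :
    eLpNorm (fun x => f (φ x) - f x) p μ ≤
      ∑ k ∈ range K, eLpNorm (fun x => f (ψ k x) - f x) p μ
        + eLpNorm ({x | K ≤ κ x}.indicator fun x => f (φ x) - f x) p μ := by
  have hmeas : ∀ k, AEStronglyMeasurable (fun x => f (ψ k x) - f x) μ := fun k =>
    (hf.comp_quasiMeasurePreserving (hψ k)).sub hf
  have hlevel : ∀ k, MeasurableSet {x | κ x = k} := fun k => hκ (measurableSet_singleton k)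
  have htail : MeasurableSet {x | K ≤ κ x} := hκ measurableSet_Ici
  have hdecomp : (fun x => f (φ x) - f x) =ᵐ[μ]
      (∑ k ∈ range K, {x | κ x = k}.indicator fun x => f (ψ k x) - f x)
        + {x | K ≤ κ x}.indicator fun x => f (φ x) - f x := by
    filter_upwards [h] with x hx
    simp only [Pi.add_apply, Finset.sum_apply, Set.indicator_apply, Set.mem_ofPred_eq,
      sum_ite_eq, mem_range]
    by_cases hk : κ x < K
    · rw [if_pos hk, if_neg (by omega), add_zero, hx]
    · rw [if_neg hk, if_pos (by omega), zero_add]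
  calc eLpNorm (fun x => f (φ x) - f x) p μ
      = eLpNorm ((∑ k ∈ range K, {x | κ x = k}.indicator fun x => f (ψ k x) - f x)
          + {x | K ≤ κ x}.indicator fun x => f (φ x) - f x) p μ := eLpNorm_congr_ae hdecomp
    _ ≤ eLpNorm (∑ k ∈ range K, {x | κ x = k}.indicator fun x => f (ψ k x) - f x) p μ
          + eLpNorm ({x | K ≤ κ x}.indicator fun x => f (φ x) - f x) p μ :=
        eLpNorm_add_le
          (Finset.aestronglyMeasurable_sum _ fun k _ => (hmeas k).indicator (hlevel k))
          (((hf.comp_quasiMeasurePreserving hφ).sub hf).indicator htail) hp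
    _ ≤ ∑ k ∈ range K, eLpNorm (fun x => f (ψ k x) - f x) p μ
          + eLpNorm ({x | K ≤ κ x}.indicator fun x => f (φ x) - f x) p μ := by
        gcongr
        refine (eLpNorm_sum_le (fun k _ => (hmeas k).indicator (hlevel k)) hp).trans ?_
        exact sum_le_sum fun k _ => eLpNorm_indicator_le _

theorem cesaroDist_le_sum_add {ψ : ℕ → ℕ → X → X} {K : ℕ} {c : ℝ≥0∞}
    (h : ∀ i, eLpNorm (fun x => f (φ i x) - f x) p μ ≤
      ∑ k ∈ range K, eLpNorm (fun x => f (ψ k i x) - f x) p μ + c) (N : ℕ) :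
    cesaroDist μ p f φ N ≤ ∑ k ∈ range K, cesaroDist μ p f (ψ k) N + c := by
  calc cesaroDist μ p f φ N
      ≤ (N : ℝ≥0∞)⁻¹ * ∑ i ∈ Icc 1 N,
          (∑ k ∈ range K, eLpNorm (fun x => f (ψ k i x) - f x) p μ + c) :=
        mul_le_mul_right (sum_le_sum fun i _ => h i) _
    _ = ∑ k ∈ range K, cesaroDist μ p f (ψ k) N + (N : ℝ≥0∞)⁻¹ * N * c := by
        rw [sum_add_distrib, sum_comm, mul_add, mul_sum, sum_const, Nat.card_Icc,
          Nat.add_sub_cancel, nsmul_eq_mul, mul_assoc]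
        rfl
    _ ≤ ∑ k ∈ range K, cesaroDist μ p f (ψ k) N + c := by
        gcongr
        exact mul_le_of_le_one_left' (ENNReal.inv_mul_le_one _)

theorem tendsto_cesaroDist_of_ae_eq_piecewise [IsFiniteMeasure μ] [MeasurableSpace E]
    [BorelSpace E] (hp : 1 ≤ p) (hp' : p ≠ ∞) (hf : MemLp f p μ) {ψ : ℕ → ℕ → X → X}
    {κ : ℕ → X → ℕ} (hφ : ∀ i, MeasurePreserving (φ i) μ μ)
    (hψ : ∀ k i, MeasurePreserving (ψ k i) μ μ) (hκ : ∀ i, Measurable (κ i))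
    (htail : ∀ δ > 0, ∃ K, ∀ i, μ {x | K ≤ κ i x} ≤ δ)
    (h : ∀ i, ∀ᵐ x ∂μ, φ i x = ψ (κ i x) i x)
    (hψf : ∀ k, Tendsto (cesaroDist μ p f (ψ k)) atTop (𝓝 0)) :
    Tendsto (cesaroDist μ p f φ) atTop (𝓝 0) := by
  refine ENNReal.tendsto_nhds_zero.2 fun ε hε => ?_
  obtain ⟨r, -, hr0, hrε⟩ := ENNReal.lt_iff_exists_real_btwn.1 hε
  have hr : 0 < r / 2 := half_pos (ENNReal.ofReal_pos.1 hr0)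
  obtain ⟨δ, hδ, hsmall⟩ := unifIntegrable_comp_sub hp hp' hf hφ hr
  obtain ⟨K, hK⟩ := htail _ (ENNReal.ofReal_pos.2 hδ)
  have hbound : ∀ N, cesaroDist μ p f φ N ≤
      ∑ k ∈ range K, cesaroDist μ p f (ψ k) N + ENNReal.ofReal (r / 2) :=
    cesaroDist_le_sum_add fun i =>
      (eLpNorm_comp_sub_le_of_ae_eq_piecewise hp hf.1 (hφ i).quasiMeasurePreserving
        (fun k => (hψ k i).quasiMeasurePreserving) (hκ i) (h i) K).trans
      (add_le_add_right (hsmall i _ (hκ i measurableSet_Ici) (hK i)) _)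
  have hsum : Tendsto (fun N => ∑ k ∈ range K, cesaroDist μ p f (ψ k) N) atTop (𝓝 0) := by
    simpa using tendsto_finsetSum (range K) fun k _ => hψf k
  filter_upwards [hsum.eventually (ge_mem_nhds (ENNReal.ofReal_pos.2 hr))] with N hN
  calc cesaroDist μ p f φ N
      ≤ ENNReal.ofReal (r / 2) + ENNReal.ofReal (r / 2) := (hbound N).trans (by gcongr)
    _ = ENNReal.ofReal r := by rw [← ENNReal.ofReal_add hr.le hr.le, add_halves]
    _ ≤ ε := hrε.le

def iterateConj (T S : X ≃ᵐ X) (i : ℕ) (x : X) : X :=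
  (⇑T)^[i] (S ((⇑T.symm)^[i] x))

theorem measurePreserving_iterateConj {T S : X ≃ᵐ X} (hT : MeasurePreserving T μ μ)
    (hS : MeasurePreserving S μ μ) (i : ℕ) : MeasurePreserving (iterateConj T S i) μ μ :=
  (hT.iterate i).comp (hS.comp ((hT.symm T).iterate i))

theorem mem_weaklyHomoclinic_iff {T S : X ≃ᵐ X} (hT : MeasurePreserving T μ μ) :
    S ∈ WeaklyHomoclinic μ T ↔ MeasurePreserving S μ μ ∧
      ∀ f : X → ℝ, MemLp f 2 μ → Tendsto (cesaroDist μ 2 f (iterateConj T S)) atTop (𝓝 0) := by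
  refine and_congr_right fun hS => forall₂_congr fun f hf => ⟨fun h => ?_, fun h => ?_⟩
  · exact tendsto_cesaroDist_of_tendsto_eLpNorm_avg_sub hf
      (measurePreserving_iterateConj hT hS) h
  · refine tendsto_of_tendsto_of_tendsto_of_le_of_le' tendsto_const_nhds h
      (.of_forall fun _ => zero_le) ?_
    filter_upwards [eventually_ne_atTop 0] with N hN
    exact eLpNorm_avg_sub_le_cesaroDist one_le_two hf.1
      (fun i => (measurePreserving_iterateConj hT hS i).quasiMeasurePreserving) hN

end

/-- If `R` is an automorphism obtained by piecing together countably many elements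
`S_k ∈ WH(T)` via a measurable index function `κ`, then `R ∈ WH(T)`:
`WH(T)` coincides with its full group. -/
theorem statement2 {X : Type*} [MeasurableSpace X] (μ : Measure X) [IsProbabilityMeasure μ]
    (T : X ≃ᵐ X) (hT : MeasurePreserving (⇑T) μ μ)
    (S : ℕ → X ≃ᵐ X) (hS : ∀ k, S k ∈ WeaklyHomoclinic μ T)
    (R : X ≃ᵐ X) (hR : MeasurePreserving (⇑R) μ μ)
    (κ : X → ℕ) (hκ : Measurable κ)
    (hRS : ∀ᵐ x ∂μ, R x = S (κ x) x) :
    R ∈ WeaklyHomoclinic μ T := by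
  have hT_inv : ∀ i, MeasurePreserving (⇑T.symm)^[i] μ μ := (hT.symm T).iterate
  refine (mem_weaklyHomoclinic_iff hT).2 ⟨hR, fun f hf => ?_⟩
  refine tendsto_cesaroDist_of_ae_eq_piecewise (κ := fun i x => κ ((⇑T.symm)^[i] x))
    one_le_two ENNReal.ofNat_ne_top hf (measurePreserving_iterateConj hT hR)
    (fun k => measurePreserving_iterateConj hT (hS k).1) (fun i => hκ.comp (hT_inv i).measurable)
    (fun δ hδ => ?_) (fun i => ?_) fun k => ((mem_weaklyHomoclinic_iff hT).1 (hS k)).2 f hf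
  · obtain ⟨K, hK⟩ :=
      ((tendsto_measure_setOf_le_atTop (μ := μ) hκ).eventually (ge_mem_nhds hδ)).exists
    exact ⟨K, fun i =>
      ((hT_inv i).measure_preimage (hκ measurableSet_Ici).nullMeasurableSet).trans_le hK⟩
  · filter_upwards [(hT_inv i).quasiMeasurePreserving.ae hRS] with x hx
    exact congrArg (⇑T)^[i] hx
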